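/- arXiv:2201.00505 — 7 statements merged into one kernel-verified Lean document; each statement's English description precedes it below -/
import Mathlib

section
/- Let u ∈ ℝ^n and p ∈ (0,1). Then the p-superquantile of u equals the optimal value of the Rockafellar–Uryasev variational problem: Q̄_p(u) = min_{η ∈ ℝ} { η + (1/(n(1−p))) Σ_{i=1}^n max(u_i − η, 0) }, and the minimum is attained. -/
open Finset MeasureTheory

/-- Empirical `p`-quantile of `u ∈ ℝⁿ`:
`Q_p(u) = inf {t : #{i : u i ≤ t} ≥ p·n}`. -/
noncomputable def empQuantile {n : ℕ} (p : ℝ) (u : Fin n → ℝ) : ℝ :=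
  sInf {t : ℝ | p * n ≤ ((Finset.univ.filter fun i => u i ≤ t).card : ℝ)}

/-- Empirical `p`-superquantile of `u ∈ ℝⁿ`:
`Q̄_p(u) = (1/(1-p)) ∫_p^1 Q_s(u) ds`. -/
noncomputable def supQuantile {n : ℕ} (p : ℝ) (u : Fin n → ℝ) : ℝ :=
  (1 - p)⁻¹ * ∫ s in p..1, empQuantile s u

/-!
Write `Q s = Q_s(u)`. On `(k/n, (k+1)/n]` the quantile `Q` is the `k`-th order statistic of `u`,
so `Q` pushes Lebesgue measure on `(0, 1]` forward to the empirical measure of `u`: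
`∫₀¹ g (Q s) ds = (1/n) Σᵢ g (uᵢ)`. Hence for every `η`,
`∫ₚ¹ Q ≤ (1-p) η + ∫ₚ¹ (Q - η)₊ ≤ (1-p) η + ∫₀¹ (Q - η)₊ = (1-p) η + (1/n) Σᵢ (uᵢ - η)₊`,
and since `Q` is nondecreasing on `(0, 1]` both inequalities are equalities at `η = Q p`.
-/

theorem integral_eq_mul_of_eqOn_Ioc {f : ℝ → ℝ} {a b c : ℝ} (hab : a ≤ b)
    (h : Set.EqOn f (fun _ => c) (Set.Ioc a b)) :
    ∫ s in a..b, f s = (b - a) * c := by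
  rw [intervalIntegral.integral_of_le hab, setIntegral_congr_fun measurableSet_Ioc h,
    setIntegral_const, Real.volume_real_Ioc_of_le hab, smul_eq_mul]

theorem intervalIntegrable_of_eqOn_Ioc {f : ℝ → ℝ} {a b c : ℝ} (hab : a ≤ b)
    (h : Set.EqOn f (fun _ => c) (Set.Ioc a b)) :
    IntervalIntegrable f volume a b :=
  (intervalIntegrable_congr (by rwa [Set.uIoc_of_le hab])).mpr intervalIntegrable_const

section MonotoneIntegral

variable {q : ℝ → ℝ} {p : ℝ}

theorem integral_le_mul_add_integral_posPart (η : ℝ) (hp0 : 0 ≤ p) (hp1 : p ≤ 1)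
    (hq : IntervalIntegrable q volume 0 1)
    (hq' : IntervalIntegrable (fun s => max (q s - η) 0) volume 0 1) :
    ∫ s in p..1, q s ≤ (1 - p) * η + ∫ s in 0..1, max (q s - η) 0 := by
  have hsub : Set.uIcc p 1 ⊆ Set.uIcc 0 1 := by
    rw [Set.uIcc_of_le hp1, Set.uIcc_of_le zero_le_one]
    exact Set.Icc_subset_Icc_left hp0
  have hq_p1 := hq.mono_set hsub
  have hq'_p1 := hq'.mono_set hsub
  have hq'_0p := hq'.mono_set (Set.uIcc_subset_uIcc_left (Set.mem_uIcc_of_le hp0 hp1))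
  have head_nonneg : 0 ≤ ∫ s in 0..p, max (q s - η) 0 :=
    intervalIntegral.integral_nonneg hp0 fun _ _ => le_max_right _ _
  have tail_le : ∫ s in p..1, (q s - η) ≤ ∫ s in p..1, max (q s - η) 0 :=
    intervalIntegral.integral_mono_on hp1 (hq_p1.sub intervalIntegrable_const) hq'_p1
      fun _ _ => le_max_left _ _
  rw [intervalIntegral.integral_sub hq_p1 intervalIntegrable_const,
    intervalIntegral.integral_const, smul_eq_mul] at tail_le
  rw [← intervalIntegral.integral_add_adjacent_intervals hq'_0p hq'_p1]
  linarith

theorem integral_eq_mul_add_integral_posPart (hp0 : 0 < p) (hp1 : p ≤ 1)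
    (hmono : MonotoneOn q (Set.Ioc 0 1)) (hq : IntervalIntegrable q volume 0 1)
    (hq' : IntervalIntegrable (fun s => max (q s - q p) 0) volume 0 1) :
    ∫ s in p..1, q s = (1 - p) * q p + ∫ s in 0..1, max (q s - q p) 0 := by
  have hp : p ∈ Set.Ioc 0 1 := ⟨hp0, hp1⟩
  have hsub : Set.uIcc p 1 ⊆ Set.uIcc 0 1 := by
    rw [Set.uIcc_of_le hp1, Set.uIcc_of_le zero_le_one]
    exact Set.Icc_subset_Icc_left hp0.le
  have hq_p1 := hq.mono_set hsub
  have hq'_0p := hq'.mono_set (Set.uIcc_subset_uIcc_left (Set.mem_uIcc_of_le hp0.le hp1))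
  have head_zero : ∫ s in 0..p, max (q s - q p) 0 = 0 := by
    refine intervalIntegral.integral_zero_ae (Filter.Eventually.of_forall fun s hs => ?_)
    rw [Set.uIoc_of_le hp0.le] at hs
    have : q s ≤ q p := hmono ⟨hs.1, hs.2.trans hp1⟩ hp hs.2
    exact max_eq_right (by linarith)
  have tail_eq : ∫ s in p..1, max (q s - q p) 0 = ∫ s in p..1, (q s - q p) := by
    refine intervalIntegral.integral_congr fun s hs => ?_
    rw [Set.uIcc_of_le hp1] at hs
    have : q p ≤ q s := hmono hp ⟨hp0.trans_le hs.1, hs.2⟩ hs.1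
    exact max_eq_left (by linarith)
  rw [← intervalIntegral.integral_add_adjacent_intervals hq'_0p (hq'.mono_set hsub),
    head_zero, tail_eq, intervalIntegral.integral_sub hq_p1 intervalIntegrable_const,
    intervalIntegral.integral_const, smul_eq_mul]
  ring

end MonotoneIntegral

section EmpiricalQuantile

variable {n : ℕ} (u : Fin n → ℝ)

theorem Monotone.lt_card_filter_le_iff {α : Type*} [LinearOrder α] {v : Fin n → α}
    (hv : Monotone v) (k : Fin n) (t : α) :
    (k : ℕ) < #{j | v j ≤ t} ↔ v k ≤ t := by
  constructor
  · intro hk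
    by_contra! hlt
    have hsub : ({j | v j ≤ t} : Finset (Fin n)) ⊆ Iio k := fun j hj => by
      rw [mem_filter_univ] at hj
      exact mem_Iio.2 (lt_of_not_ge fun hkj => (hlt.trans_le (hv hkj)).not_ge hj)
    exact (card_le_card hsub).trans_eq (Fin.card_Iio k) |>.not_gt hk
  · intro hk
    have hsub : Iic k ⊆ ({j | v j ≤ t} : Finset (Fin n)) := fun j hj => by
      simpa using (hv (mem_Iic.1 hj)).trans hk
    exact Nat.lt_of_succ_le ((Fin.card_Iic k).symm.trans_le (card_le_card hsub))

theorem card_filter_sort_le (t : ℝ) :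
    #{j | u (Tuple.sort u j) ≤ t} = #{i | u i ≤ t} := by
  rw [card_filter, card_filter,
    Equiv.sum_comp (Tuple.sort u) (fun i => if u i ≤ t then 1 else 0)]

theorem empQuantile_eq_of_mem_Ioc (k : Fin n) {s : ℝ}
    (hs : s ∈ Set.Ioc ((k : ℕ) / n : ℝ) (((k : ℕ) + 1) / n)) :
    empQuantile s u = u (Tuple.sort u k) := by
  have hn : (0 : ℝ) < n := by exact_mod_cast k.pos
  obtain ⟨hks, hsk⟩ := hs
  rw [div_lt_iff₀ hn] at hks
  rw [le_div_iff₀ hn] at hsk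
  suffices {t : ℝ | s * n ≤ #{i | u i ≤ t}} = Set.Ici (u (Tuple.sort u k)) by
    rw [empQuantile, this, csInf_Ici]
  ext t
  rw [Set.mem_ofPred_eq, Set.mem_Ici, ← card_filter_sort_le]
  refine Iff.trans ?_ ((Tuple.monotone_sort u).lt_card_filter_le_iff k t)
  constructor
  · intro h
    exact_mod_cast hks.trans_le h
  · intro h
    exact hsk.trans (by exact_mod_cast h)

theorem empQuantile_monotoneOn (hn : 0 < n) :
    MonotoneOn (fun s => empQuantile s u) (Set.Ioc 0 1) := by
  intro s hs s' hs' hss'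
  have hn' : (0 : ℝ) < n := by exact_mod_cast hn
  refine csInf_le_csInf ?_ ?_ fun t ht => (mul_le_mul_of_nonneg_right hss' hn'.le).trans ht
  · obtain ⟨l, hl⟩ := (Set.finite_range u).bddBelow
    refine ⟨l, fun t ht => ?_⟩
    have hcard : 0 < #{i | u i ≤ t} := by
      exact_mod_cast (mul_pos hs.1 hn').trans_le ht
    obtain ⟨i, hi⟩ := card_pos.1 hcard
    exact (hl ⟨i, rfl⟩).trans ((mem_filter_univ i).1 hi)
  · obtain ⟨m, hm⟩ := (Set.finite_range u).bddAbove
    refine ⟨m, ?_⟩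
    rw [Set.mem_ofPred_eq, filter_true_of_mem fun i _ => hm ⟨i, rfl⟩, card_univ,
      Fintype.card_fin]
    exact mul_le_of_le_one_left hn'.le hs'.2

theorem eqOn_comp_empQuantile_Ioc (g : ℝ → ℝ) (k : Fin n) :
    Set.EqOn (fun s => g (empQuantile s u)) (fun _ => g (u (Tuple.sort u k)))
      (Set.Ioc ((k : ℕ) / n : ℝ) (((k + 1 : ℕ) : ℝ) / n)) := by
  intro s hs
  rw [Nat.cast_succ] at hs
  simp only [empQuantile_eq_of_mem_Ioc u k hs]

theorem intervalIntegrable_comp_empQuantile (hn : 0 < n) (g : ℝ → ℝ) :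
    IntervalIntegrable (fun s => g (empQuantile s u)) volume 0 1 := by
  have := IntervalIntegrable.trans_iterate (a := fun k : ℕ => (k : ℝ) / n) (n := n)
    fun k hk => intervalIntegrable_of_eqOn_Ioc (by gcongr; simp)
      (eqOn_comp_empQuantile_Ioc u g ⟨k, hk⟩)
  simpa [hn.ne'] using this

theorem integral_comp_empQuantile (hn : 0 < n) (g : ℝ → ℝ) :
    ∫ s in 0..1, g (empQuantile s u) = (∑ i, g (u i)) / n := by
  have hpieces := intervalIntegral.sum_integral_adjacent_intervals
    (a := fun k : ℕ => (k : ℝ) / n) (n := n) (f := fun s => g (empQuantile s u))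
    fun k hk => intervalIntegrable_of_eqOn_Ioc (by gcongr; simp)
      (eqOn_comp_empQuantile_Ioc u g ⟨k, hk⟩)
  simp only [Nat.cast_zero, zero_div, div_self (Nat.cast_ne_zero (R := ℝ) |>.2 hn.ne'),
    Finset.sum_range] at hpieces
  rw [← hpieces, ← Equiv.sum_comp (Tuple.sort u) (fun i => g (u i)), sum_div]
  refine sum_congr rfl fun k _ => ?_
  rw [integral_eq_mul_of_eqOn_Ioc (by gcongr; simp) (eqOn_comp_empQuantile_Ioc u g k)]
  push_cast
  ring

end EmpiricalQuantile

/-- Rockafellar–Uryasev: the superquantile is the minimal value (attained) of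
`η ↦ η + (1/(n(1-p))) Σ_i max(u_i - η, 0)`. -/
theorem stmt0 {n : ℕ} (hn : 1 ≤ n) (u : Fin n → ℝ) (p : ℝ) (hp0 : 0 < p) (hp1 : p < 1) :
    IsLeast
      (Set.range fun η : ℝ =>
        η + (1 / ((n : ℝ) * (1 - p))) * ∑ i, max (u i - η) 0)
      (supQuantile p u) := by
  have hp : 1 - p ≠ 0 := (sub_pos.2 hp1).ne'
  have hQ := intervalIntegrable_comp_empQuantile u hn fun x => x
  have hQ' η := intervalIntegrable_comp_empQuantile u hn fun x => max (x - η) 0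
  have hmean η := integral_comp_empQuantile u hn fun x => max (x - η) 0
  have objective η : η + 1 / (n * (1 - p)) * ∑ i, max (u i - η) 0
      = (1 - p)⁻¹ * ((1 - p) * η + (∑ i, max (u i - η) 0) / n) := by
    field_simp
  refine ⟨⟨empQuantile p u, ?_⟩, ?_⟩
  · dsimp only
    rw [objective, supQuantile, ← hmean, ← integral_eq_mul_add_integral_posPart hp0 hp1.le
      (empQuantile_monotoneOn u hn) hQ (hQ' _)]
  · rintro _ ⟨η, rfl⟩
    dsimp only
    rw [objective, supQuantile, ← hmean]
    gcongr
    exact integral_le_mul_add_integral_posPart η hp0.le hp1.le hQ (hQ' η)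
end

section
/- Let u ∈ ℝ^n and p ∈ (0,1). Then η = Q_p(u), the empirical p-quantile of u, attains the minimum of the function η ↦ η + (1/(n(1−p))) Σ_{i=1}^n max(u_i − η, 0) over η ∈ ℝ. -/
open Finset

/-- The empirical `p`-quantile attains the minimum of the Rockafellar–Uryasev
function `η ↦ η + (1/(n(1-p))) Σ_i max(u_i - η, 0)`. -/
theorem stmt1 {n : ℕ} (hn : 1 ≤ n) (u : Fin n → ℝ) (p : ℝ) (hp0 : 0 < p) (hp1 : p < 1) :
    ∀ η : ℝ,
      empQuantile p u + (1 / ((n : ℝ) * (1 - p))) * ∑ i, max (u i - empQuantile p u) 0 ≤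
        η + (1 / ((n : ℝ) * (1 - p))) * ∑ i, max (u i - η) 0 := by
  intro η
  have hn0 : (0:ℝ) < n := by exact_mod_cast Nat.lt_of_lt_of_le Nat.zero_lt_one hn
  have hune : (Finset.univ : Finset (Fin n)).Nonempty := by
    have : (0:ℕ) < n := hn
    exact ⟨⟨0, this⟩, mem_univ _⟩
  set S : Set ℝ := {t : ℝ | p * n ≤ ((Finset.univ.filter fun i => u i ≤ t).card : ℝ)} with hSdef
  have hq : empQuantile p u = sInf S := rfl
  set q : ℝ := empQuantile p u with hqdef
  -- S is nonempty
  have hSne : S.Nonempty := by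
    refine ⟨Finset.univ.sup' hune u, ?_⟩
    have hfil : (Finset.univ.filter fun i => u i ≤ Finset.univ.sup' hune u) = Finset.univ := by
      ext i
      simp only [mem_filter, mem_univ, true_and, iff_true]
      exact Finset.le_sup' u (mem_univ i)
    simp only [hSdef, Set.mem_setOf_eq, hfil, card_univ, Fintype.card_fin]
    nlinarith
  -- S is bounded below
  have hbdd : BddBelow S := by
    refine ⟨Finset.univ.inf' hune u, ?_⟩
    intro t ht
    simp only [hSdef, Set.mem_setOf_eq] at ht
    have hpos : (0:ℝ) < ((Finset.univ.filter fun i => u i ≤ t).card : ℝ) := by nlinarith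
    have hcpos : 0 < (Finset.univ.filter fun i => u i ≤ t).card := by exact_mod_cast hpos
    obtain ⟨i, hi⟩ := Finset.card_pos.mp hcpos
    simp only [mem_filter, mem_univ, true_and] at hi
    exact le_trans (Finset.inf'_le u (mem_univ i)) hi
  -- key fact 1 : q ∈ S, i.e. #{i : u i ≤ q} ≥ p n
  have hqS : p * n ≤ ((Finset.univ.filter fun i => u i ≤ q).card : ℝ) := by
    by_contra hcon
    push_neg at hcon
    rcases (Finset.univ.filter fun i => q < u i).eq_empty_or_nonempty with hT | hT
    · -- all u i ≤ q : card = n ≥ p n, contradiction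
      have hfil : (Finset.univ.filter fun i => u i ≤ q) = Finset.univ := by
        ext i
        simp only [mem_filter, mem_univ, true_and, iff_true]
        by_contra h
        have : i ∈ (Finset.univ.filter fun i => q < u i) := by
          simp only [mem_filter, mem_univ, true_and]
          exact lt_of_not_ge h
        simp [hT] at this
      rw [hfil] at hcon
      simp only [card_univ, Fintype.card_fin] at hcon
      nlinarith
    · set m := (Finset.univ.filter fun i => q < u i).inf' hT u with hm
      have hqm : q < m := by
        rw [hm, Finset.lt_inf'_iff]
        intro i hi
        simp only [mem_filter, mem_univ, true_and] at hi
        exact hi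
      have hlb : ∀ t ∈ S, m ≤ t := by
        intro t ht
        by_contra hlt
        push_neg at hlt
        have hsub : (Finset.univ.filter fun i => u i ≤ t) ⊆
            (Finset.univ.filter fun i => u i ≤ q) := by
          intro i hi
          simp only [mem_filter, mem_univ, true_and] at hi ⊢
          by_contra h
          have hmem : i ∈ (Finset.univ.filter fun i => q < u i) := by
            simp only [mem_filter, mem_univ, true_and]
            exact lt_of_not_ge h
          have := Finset.inf'_le u hmem
          rw [← hm] at this
          linarith
        have hcard : ((Finset.univ.filter fun i => u i ≤ t).card : ℝ) ≤
            ((Finset.univ.filter fun i => u i ≤ q).card : ℝ) := by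
          exact_mod_cast Finset.card_le_card hsub
        simp only [hSdef, Set.mem_setOf_eq] at ht
        linarith
      have : m ≤ q := le_csInf hSne hlb
      linarith
  -- key fact 2 : #{i : u i < q} ≤ p n
  have hq2 : ((Finset.univ.filter fun i => u i < q).card : ℝ) ≤ p * n := by
    rcases (Finset.univ.filter fun i => u i < q).eq_empty_or_nonempty with h | h
    · rw [h]
      simp only [card_empty, Nat.cast_zero]
      positivity
    · set M := (Finset.univ.filter fun i => u i < q).sup' h u with hM
      have hMq : M < q := by
        rw [hM, Finset.sup'_lt_iff]
        intro i hi
        simp only [mem_filter, mem_univ, true_and] at hi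
        exact hi
      have hMnotS : M ∉ S := by
        intro hMS
        have : q ≤ M := csInf_le hbdd hMS
        linarith
      simp only [hSdef, Set.mem_setOf_eq, not_le] at hMnotS
      have hsub : (Finset.univ.filter fun i => u i < q) ⊆
          (Finset.univ.filter fun i => u i ≤ M) := by
        intro i hi
        simp only [mem_filter, mem_univ, true_and] at hi ⊢
        exact Finset.le_sup' u (by simp only [mem_filter, mem_univ, true_and]; exact hi)
      have hcard : ((Finset.univ.filter fun i => u i < q).card : ℝ) ≤
          ((Finset.univ.filter fun i => u i ≤ M).card : ℝ) := by
        exact_mod_cast Finset.card_le_card hsub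
      linarith
  -- notation
  have hden : (0:ℝ) < (n:ℝ) * (1 - p) := by nlinarith
  set c : ℝ := 1 / ((n:ℝ) * (1 - p)) with hc
  have hc0 : 0 < c := by positivity
  have hcmul : c * ((n:ℝ) * (1 - p)) = 1 := one_div_mul_cancel (ne_of_gt hden)
  rcases le_or_gt q η with hle | hlt
  · -- case q ≤ η
    set A : Finset (Fin n) := Finset.univ.filter fun i => q < u i with hA
    -- card A ≤ n (1-p)
    have hsplit : (Finset.univ.filter fun i => u i ≤ q).card + A.card = n := by
      have := Finset.card_filter_add_card_filter_not
        (s := (Finset.univ : Finset (Fin n))) (p := fun i => u i ≤ q)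
      simp only [card_univ, Fintype.card_fin] at this
      rw [hA]
      convert this using 3
      ext i
      simp [not_le]
    have hcardA : (A.card : ℝ) ≤ (n:ℝ) * (1 - p) := by
      have : (A.card : ℝ) = (n:ℝ) - ((Finset.univ.filter fun i => u i ≤ q).card : ℝ) := by
        have := hsplit
        have h2 : ((Finset.univ.filter fun i => u i ≤ q).card : ℝ) + (A.card : ℝ) = (n:ℝ) := by
          exact_mod_cast congrArg (Nat.cast : ℕ → ℝ) this
        linarith
      rw [this]
      nlinarith
    -- per-term bound
    have hterm : ∀ i : Fin n, max (u i - q) 0 - max (u i - η) 0 ≤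
        if q < u i then η - q else 0 := by
      intro i
      by_cases h : q < u i
      · rw [if_pos h]
        have h1 : max (u i - q) 0 = u i - q := max_eq_left (by linarith)
        have h2 : u i - η ≤ max (u i - η) 0 := le_max_left _ _
        linarith
      · rw [if_neg h]
        push_neg at h
        have h1 : max (u i - q) 0 = 0 := max_eq_right (by linarith)
        have h2 : (0:ℝ) ≤ max (u i - η) 0 := le_max_right _ _
        linarith
    have hsum : (∑ i, max (u i - q) 0) - (∑ i, max (u i - η) 0) ≤ (η - q) * (A.card : ℝ) := by
      rw [← Finset.sum_sub_distrib]
      calc ∑ i, (max (u i - q) 0 - max (u i - η) 0)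
          ≤ ∑ i, (if q < u i then η - q else 0) := Finset.sum_le_sum fun i _ => hterm i
        _ = ∑ i ∈ A, (η - q) := by rw [hA, Finset.sum_filter]
        _ = (A.card : ℝ) * (η - q) := by rw [Finset.sum_const, nsmul_eq_mul]
        _ = (η - q) * (A.card : ℝ) := by ring
    -- conclude
    have h1 : c * ((∑ i, max (u i - q) 0) - (∑ i, max (u i - η) 0)) ≤
        c * ((η - q) * (A.card : ℝ)) := by
      exact mul_le_mul_of_nonneg_left hsum (le_of_lt hc0)
    have h2 : c * ((η - q) * (A.card : ℝ)) ≤ c * ((η - q) * ((n:ℝ) * (1 - p))) := by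
      have : (η - q) * (A.card : ℝ) ≤ (η - q) * ((n:ℝ) * (1 - p)) :=
        mul_le_mul_of_nonneg_left hcardA (by linarith)
      exact mul_le_mul_of_nonneg_left this (le_of_lt hc0)
    have h3 : c * ((η - q) * ((n:ℝ) * (1 - p))) = η - q := by
      rw [mul_comm (η - q) _, ← mul_assoc, hcmul, one_mul]
    have := h1.trans (h2.trans_eq h3)
    rw [mul_sub] at this
    linarith
  · -- case η < q
    set B : Finset (Fin n) := Finset.univ.filter fun i => q ≤ u i with hB
    have hsplit : (Finset.univ.filter fun i => u i < q).card + B.card = n := by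
      have := Finset.card_filter_add_card_filter_not
        (s := (Finset.univ : Finset (Fin n))) (p := fun i => u i < q)
      simp only [card_univ, Fintype.card_fin] at this
      rw [hB]
      convert this using 3
      ext i
      simp [not_lt]
    have hcardB : (n:ℝ) * (1 - p) ≤ (B.card : ℝ) := by
      have h2 : ((Finset.univ.filter fun i => u i < q).card : ℝ) + (B.card : ℝ) = (n:ℝ) := by
        exact_mod_cast congrArg (Nat.cast : ℕ → ℝ) hsplit
      nlinarith
    have hterm : ∀ i : Fin n, (if q ≤ u i then q - η else 0) ≤
        max (u i - η) 0 - max (u i - q) 0 := by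
      intro i
      by_cases h : q ≤ u i
      · rw [if_pos h]
        have h1 : max (u i - η) 0 = u i - η := max_eq_left (by linarith)
        have h2 : max (u i - q) 0 = u i - q := max_eq_left (by linarith)
        linarith
      · rw [if_neg h]
        push_neg at h
        have h1 : max (u i - q) 0 = 0 := max_eq_right (by linarith)
        have h2 : (0:ℝ) ≤ max (u i - η) 0 := le_max_right _ _
        linarith
    have hsum : (q - η) * (B.card : ℝ) ≤
        (∑ i, max (u i - η) 0) - (∑ i, max (u i - q) 0) := by
      rw [← Finset.sum_sub_distrib]
      calc (q - η) * (B.card : ℝ) = (B.card : ℝ) * (q - η) := by ring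
        _ = ∑ i ∈ B, (q - η) := by rw [Finset.sum_const, nsmul_eq_mul]
        _ = ∑ i, (if q ≤ u i then q - η else 0) := by rw [hB, Finset.sum_filter]
        _ ≤ ∑ i, (max (u i - η) 0 - max (u i - q) 0) :=
            Finset.sum_le_sum fun i _ => hterm i
    have h1 : c * ((q - η) * (B.card : ℝ)) ≤
        c * ((∑ i, max (u i - η) 0) - (∑ i, max (u i - q) 0)) :=
      mul_le_mul_of_nonneg_left hsum (le_of_lt hc0)
    have h2 : c * ((q - η) * ((n:ℝ) * (1 - p))) ≤ c * ((q - η) * (B.card : ℝ)) := by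
      have : (q - η) * ((n:ℝ) * (1 - p)) ≤ (q - η) * (B.card : ℝ) :=
        mul_le_mul_of_nonneg_left hcardB (by linarith)
      exact mul_le_mul_of_nonneg_left this (le_of_lt hc0)
    have h3 : c * ((q - η) * ((n:ℝ) * (1 - p))) = q - η := by
      rw [mul_comm (q - η) _, ← mul_assoc, hcmul, one_mul]
    have := (h3.symm.trans_le h2).trans h1
    rw [mul_sub] at this
    linarith
end

section
/- Let p ∈ (0,1) and let L^1, …, L^n : ℝ^d → ℝ be convex functions. Then the superquantile objective f(w) = Q̄_p(L^1(w),…,L^n(w)) is a convex function of w ∈ ℝ^d. -/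
open Finset MeasureTheory

/-! On `(k/n, (k+1)/n]` the quantile `s ↦ Q_s(u)` is constant, equal to the `k`-th order statistic
`u₍ₖ₎`, so `Q̄_p(u) = (1-p)⁻¹ ∑ₖ cₖ u₍ₖ₎` where `cₖ` is the length of `(p, 1] ∩ (k/n, (k+1)/n]`.
These weights are nonnegative and nondecreasing in `k`, so by the rearrangement inequality the sum
is the maximum over permutations `σ` of the linear forms `u ↦ ∑ₖ cₖ u(σ k)`: a convex and
monotone function of `u`. A convex monotone function of convex functions is convex. -/

theorem ConvexOn.comp_pi {ι E : Type*} [AddCommMonoid E] [Module ℝ E] {s : Set E}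
    {g : (ι → ℝ) → ℝ} (hg : ConvexOn ℝ Set.univ g) (hg_mono : Monotone g) (hs : Convex ℝ s)
    {L : ι → E → ℝ} (hL : ∀ i, ConvexOn ℝ s (L i)) :
    ConvexOn ℝ s fun w => g fun i => L i w := by
  refine ⟨hs, fun x hx y hy a b ha hb hab => ?_⟩
  calc g (fun i => L i (a • x + b • y))
      ≤ g (a • (fun i => L i x) + b • fun i => L i y) :=
        hg_mono fun i => (hL i).2 hx hy ha hb hab
    _ ≤ a • g (fun i => L i x) + b • g (fun i => L i y) :=
        hg.2 (Set.mem_univ _) (Set.mem_univ _) ha hb hab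

section

variable {n : ℕ}

theorem card_filter_comp_sort (u : Fin n → ℝ) (t : ℝ) :
    #{i | u (Tuple.sort u i) ≤ t} = #{i | u i ≤ t} :=
  Finset.card_equiv (Tuple.sort u) (by simp)

theorem Monotone.le_card_filter_le_iff {α : Type*} [LinearOrder α] {y : Fin n → α}
    (hy : Monotone y) (k : Fin n) (t : α) :
    (k : ℕ) + 1 ≤ #{i | y i ≤ t} ↔ y k ≤ t := by
  constructor
  · intro hcard
    by_contra! hlt
    have hsub : ({i | y i ≤ t} : Finset (Fin n)) ⊆ Iio k := fun i hi => by
      simp only [mem_filter, mem_univ, true_and] at hi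
      exact mem_Iio.2 (lt_of_not_ge fun hki => (hlt.trans_le (hy hki)).not_ge hi)
    have := card_le_card hsub
    rw [Fin.card_Iio] at this
    omega
  · intro hk
    have hsub : Iic k ⊆ ({i | y i ≤ t} : Finset (Fin n)) := fun i hi => by
      simpa using (hy (mem_Iic.1 hi)).trans hk
    simpa using card_le_card hsub

theorem empQuantile_eq_sort {u : Fin n → ℝ} {s : ℝ} {k : Fin n} (hs : ⌈s * n⌉₊ = k + 1) :
    empQuantile s u = u (Tuple.sort u k) := by
  have hset : {t : ℝ | s * n ≤ (#{i | u i ≤ t} : ℝ)} = Set.Ici (u (Tuple.sort u k)) := by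
    ext t
    rw [Set.mem_Ici, Set.mem_ofPred_eq, ← Nat.ceil_le, hs, ← card_filter_comp_sort]
    exact (Tuple.monotone_sort u).le_card_filter_le_iff k t
  rw [empQuantile, hset, csInf_Ici]

theorem ceil_mul_eq_iff_mem_Ioc (hn : 0 < n) {s : ℝ} {k : ℕ} :
    ⌈s * n⌉₊ = k + 1 ↔ s ∈ Set.Ioc (k / n : ℝ) ((k + 1) / n) := by
  have hn' : (0 : ℝ) < n := by exact_mod_cast hn
  rw [Nat.ceil_eq_iff k.succ_ne_zero, Set.mem_Ioc, div_lt_iff₀ hn', le_div_iff₀ hn']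
  push_cast
  simp

theorem empQuantile_eq_sum_indicator (hn : 0 < n) (u : Fin n → ℝ) {s : ℝ}
    (hs : s ∈ Set.Ioc 0 1) :
    empQuantile s u = ∑ k : Fin n,
      (Set.Ioc (k / n : ℝ) ((k + 1) / n)).indicator (fun _ => u (Tuple.sort u k)) s := by
  have hn' : (0 : ℝ) < n := by exact_mod_cast hn
  have hpos : 0 < ⌈s * n⌉₊ := Nat.ceil_pos.2 (mul_pos hs.1 hn')
  have hle : ⌈s * n⌉₊ ≤ n := Nat.ceil_le.2 (by nlinarith [hs.2])
  set k : Fin n := ⟨⌈s * n⌉₊ - 1, by omega⟩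
  have hk : ⌈s * n⌉₊ = k + 1 := by simp only [k]; omega
  rw [sum_eq_single k, Set.indicator_of_mem ((ceil_mul_eq_iff_mem_Ioc hn).1 hk),
    empQuantile_eq_sort hk]
  · intro j _ hjk
    refine Set.indicator_of_notMem (fun hj => hjk (Fin.ext ?_)) _
    have := (ceil_mul_eq_iff_mem_Ioc hn).2 hj
    omega
  · simp

noncomputable def superquantileWeight (p : ℝ) (n k : ℕ) : ℝ :=
  volume.real (Set.Ioc p 1 ∩ Set.Ioc (k / n : ℝ) ((k + 1) / n))

theorem integral_empQuantile (hn : 0 < n) {p : ℝ} (hp0 : 0 ≤ p) (hp1 : p ≤ 1) (u : Fin n → ℝ) :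
    ∫ s in p..1, empQuantile s u = ∑ k : Fin n, superquantileWeight p n k * u (Tuple.sort u k) := by
  rw [intervalIntegral.integral_of_le hp1,
    setIntegral_congr_fun measurableSet_Ioc fun s hs =>
      empQuantile_eq_sum_indicator hn u ⟨hp0.trans_lt hs.1, hs.2⟩,
    integral_finsetSum _ fun k _ => (integrable_const _).indicator measurableSet_Ioc]
  refine sum_congr rfl fun k _ => ?_
  rw [setIntegral_indicator measurableSet_Ioc, setIntegral_const, smul_eq_mul, superquantileWeight]

theorem superquantileWeight_eq {p : ℝ} {k : ℕ} (hk : k + 1 ≤ n) :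
    superquantileWeight p n k = max ((k + 1) / n - max p (k / n)) 0 := by
  have hn : (0 : ℝ) < n := by exact_mod_cast (by omega : 0 < n)
  have hk1 : ((k : ℝ) + 1) / n ≤ 1 := by
    rw [div_le_one hn]
    exact_mod_cast hk
  rw [superquantileWeight, Set.Ioc_inter_Ioc, min_eq_right hk1, Real.volume_real_Ioc]

theorem monotone_superquantileWeight (p : ℝ) :
    Monotone fun k : Fin n => superquantileWeight p n k := by
  intro k k' hkk'
  have hn : (0 : ℝ) < n := by exact_mod_cast k.pos
  have hdiv : (k : ℝ) / n ≤ k' / n := by gcongr; exact_mod_cast hkk'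
  have hmax : (k : ℝ) / n - max p (k / n) ≤ k' / n - max p (k' / n) := by
    simp only [max_def]
    split_ifs <;> linarith
  dsimp only
  rw [superquantileWeight_eq k.2, superquantileWeight_eq k'.2, add_div, add_div]
  gcongr ?_ ⊔ _
  linarith

section SortedSum

variable {c : Fin n → ℝ}

theorem sum_mul_comp_perm_le_sum_mul_sort (hc : Monotone c) (v : Fin n → ℝ)
    (σ : Equiv.Perm (Fin n)) :
    ∑ k, c k * v (σ k) ≤ ∑ k, c k * v (Tuple.sort v k) := by
  simpa using (hc.monovary (Tuple.monotone_sort v)).sum_mul_comp_perm_le_sum_mul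
    (σ := σ.trans (Tuple.sort v).symm)

theorem convexOn_sum_mul_sort (hc : Monotone c) :
    ConvexOn ℝ Set.univ fun u : Fin n → ℝ => ∑ k, c k * u (Tuple.sort u k) := by
  refine ⟨convex_univ, fun u _ v _ a b ha hb hab => ?_⟩
  set σ := Tuple.sort (a • u + b • v)
  calc ∑ k, c k * (a • u + b • v) (σ k)
      = a * ∑ k, c k * u (σ k) + b * ∑ k, c k * v (σ k) := by
        simp only [Pi.add_apply, Pi.smul_apply, smul_eq_mul, mul_sum, ← sum_add_distrib]
        exact sum_congr rfl fun k _ => by ring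
    _ ≤ a * ∑ k, c k * u (Tuple.sort u k) + b * ∑ k, c k * v (Tuple.sort v k) :=
        add_le_add (mul_le_mul_of_nonneg_left (sum_mul_comp_perm_le_sum_mul_sort hc u σ) ha)
          (mul_le_mul_of_nonneg_left (sum_mul_comp_perm_le_sum_mul_sort hc v σ) hb)

theorem monotone_sum_mul_sort (hc_nonneg : ∀ k, 0 ≤ c k) (hc : Monotone c) :
    Monotone fun u : Fin n → ℝ => ∑ k, c k * u (Tuple.sort u k) := by
  intro u v huv
  calc ∑ k, c k * u (Tuple.sort u k)
      ≤ ∑ k, c k * v (Tuple.sort u k) := by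
        gcongr with k
        · exact hc_nonneg k
        · exact huv _
    _ ≤ ∑ k, c k * v (Tuple.sort v k) := sum_mul_comp_perm_le_sum_mul_sort hc v _

end SortedSum

section Superquantile

variable {p : ℝ}

theorem supQuantile_eq_sum (hn : 0 < n) (hp0 : 0 ≤ p) (hp1 : p ≤ 1) :
    supQuantile (n := n) p =
      fun u => (1 - p)⁻¹ • ∑ k : Fin n, superquantileWeight p n k * u (Tuple.sort u k) :=
  funext fun u => by rw [supQuantile, integral_empQuantile hn hp0 hp1, smul_eq_mul]

theorem convexOn_supQuantile (hn : 0 < n) (hp0 : 0 ≤ p) (hp1 : p ≤ 1) :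
    ConvexOn ℝ Set.univ (supQuantile (n := n) p) := by
  rw [supQuantile_eq_sum hn hp0 hp1]
  exact (convexOn_sum_mul_sort (monotone_superquantileWeight p)).smul
    (inv_nonneg.2 (sub_nonneg.2 hp1))

theorem monotone_supQuantile (hn : 0 < n) (hp0 : 0 ≤ p) (hp1 : p ≤ 1) :
    Monotone (supQuantile (n := n) p) := by
  rw [supQuantile_eq_sum hn hp0 hp1]
  exact (monotone_sum_mul_sort (fun _ => measureReal_nonneg)
    (monotone_superquantileWeight p)).const_smul (inv_nonneg.2 (sub_nonneg.2 hp1))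

end Superquantile

end

/-- If the losses `L^i : ℝ^d → ℝ` are convex, then the superquantile objective
`w ↦ Q̄_p(L^1(w), …, L^n(w))` is convex. -/
theorem stmt4 {n d : ℕ} (hn : 1 ≤ n) (p : ℝ) (hp0 : 0 < p) (hp1 : p < 1)
    (L : Fin n → (Fin d → ℝ) → ℝ) (hL : ∀ i, ConvexOn ℝ Set.univ (L i)) :
    ConvexOn ℝ Set.univ (fun w : Fin d → ℝ => supQuantile p (fun i => L i w)) :=
  (convexOn_supQuantile hn hp0.le hp1.le).comp_pi (monotone_supQuantile hn hp0.le hp1.le)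
    convex_univ hL
end

section
/- (Proposition 2, gradient part.) Let p ∈ (0,1), n ≥ 1, μ > 0, and let d(q) = Σ_{i=1}^n (q_i − 1/n)². Let L^1,…,L^n : ℝ^d → ℝ each be differentiable at w ∈ ℝ^d, and define f_μ(w) = max_{q ∈ C_p} ( Σ_i q_i L^i(w) − μ d(q) ). Then f_μ is differentiable at w and ∇f_μ(w) = Σ_{i=1}^n (q_μ(w))_i ∇L^i(w), where q_μ(w) is the unique maximizer in C_p of q ↦ Σ_i q_i L^i(w) − μ d(q). -/
/-!
With `q₀` the maximizer at `a`, the smoothed max `V(b) = sup_{q ∈ C} (⟨q, b⟩ - μ‖q - c‖²)` is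
squeezed between two functions tangent to each other at `a`:
`V(a) + ⟨q₀, b - a⟩ ≤ V(b) ≤ V(a) + ⟨q₀, b - a⟩ + ‖b - a‖² / (2μ)`.
The lower bound is feasibility of `q₀`; the upper one is strong concavity of the objective at its
maximizer (compare with the midpoint of `q` and `q₀`) followed by Young's inequality. So `V` is
differentiable at `a` with gradient `q₀`, and the theorem is the chain rule with `a = (L^i(w))ᵢ`.
-/

open Finset

def Cp (n : ℕ) (p : ℝ) : Set (Fin n → ℝ) :=
  {q | (∀ i, 0 ≤ q i) ∧ (∑ i, q i) = 1 ∧ ∀ i, q i ≤ 1 / ((n : ℝ) * (1 - p))}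

open Filter Topology

theorem convex_Cp (n : ℕ) (p : ℝ) : Convex ℝ (Cp n p) := by
  rintro q ⟨hq0, hq1, hqle⟩ q' ⟨hq'0, hq'1, hq'le⟩ s t hs ht hst
  refine ⟨fun i => ?_, ?_, fun i => ?_⟩
  · simp only [Pi.add_apply, Pi.smul_apply, smul_eq_mul]
    have := hq0 i; have := hq'0 i; positivity
  · simp only [Pi.add_apply, Pi.smul_apply, smul_eq_mul, sum_add_distrib, ← mul_sum, hq1, hq'1]
    simpa using hst
  · simp only [Pi.add_apply, Pi.smul_apply, smul_eq_mul]
    calc s * q i + t * q' i ≤ s * (1 / (n * (1 - p))) + t * (1 / (n * (1 - p))) := by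
          gcongr
          exacts [hqle i, hq'le i]
      _ = 1 / (n * (1 - p)) := by rw [← add_mul, hst, one_mul]

theorem HasFDerivAt.of_eventually_le_of_le {E : Type*} [NormedAddCommGroup E] [NormedSpace ℝ E]
    {f l u : E → ℝ} {f' : E →L[ℝ] ℝ} {x : E} (hl : HasFDerivAt l f' x) (hu : HasFDerivAt u f' x)
    (hlf : ∀ᶠ y in 𝓝 x, l y ≤ f y) (hfu : ∀ᶠ y in 𝓝 x, f y ≤ u y) (hx : l x = u x) :
    HasFDerivAt f f' x := by
  have hlx := hlf.self_of_nhds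
  have hux := hfu.self_of_nhds
  refine .of_isLittleO <| Asymptotics.isLittleO_iff.2 fun ε hε => ?_
  filter_upwards [Asymptotics.isLittleO_iff.1 hl.isLittleO hε,
    Asymptotics.isLittleO_iff.1 hu.isLittleO hε, hlf, hfu] with y hly huy hlfy hfuy
  rw [Real.norm_eq_abs, abs_le] at hly huy ⊢
  constructor <;> linarith [hly.1, huy.2]

section SmoothedMax

variable {ι : Type*} [Fintype ι]

def smoothedObjective (μ : ℝ) (c a q : ι → ℝ) : ℝ :=
  ∑ i, q i * a i - μ * ∑ i, (q i - c i) ^ 2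

noncomputable def smoothedMax (μ : ℝ) (c : ι → ℝ) (C : Set (ι → ℝ)) (a : ι → ℝ) : ℝ :=
  sSup (smoothedObjective μ c a '' C)

theorem smoothedObjective_midpoint (μ : ℝ) (c a q q' : ι → ℝ) :
    smoothedObjective μ c a ((1 / 2 : ℝ) • q + (1 / 2 : ℝ) • q') =
      (smoothedObjective μ c a q + smoothedObjective μ c a q') / 2 +
        μ / 4 * ∑ i, (q i - q' i) ^ 2 := by
  have hlin : ∑ i, (1 / 2 * q i + 1 / 2 * q' i) * a i =
      (∑ i, q i * a i + ∑ i, q' i * a i) / 2 := by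
    rw [← sum_add_distrib, sum_div]
    exact sum_congr rfl fun i _ => by ring
  have hquad : ∑ i, (1 / 2 * q i + 1 / 2 * q' i - c i) ^ 2 =
      (∑ i, (q i - c i) ^ 2 + ∑ i, (q' i - c i) ^ 2) / 2 - (∑ i, (q i - q' i) ^ 2) / 4 := by
    rw [← sum_add_distrib, sum_div, sum_div, ← sum_sub_distrib]
    exact sum_congr rfl fun i _ => by ring
  simp only [smoothedObjective, Pi.add_apply, Pi.smul_apply, smul_eq_mul, hlin, hquad]
  ring

theorem smoothedObjective_eq_add (μ : ℝ) (c a b q : ι → ℝ) :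
    smoothedObjective μ c b q = smoothedObjective μ c a q + ∑ i, q i * (b i - a i) := by
  simp only [smoothedObjective, mul_sub, sum_sub_distrib]
  ring

theorem mul_sub_half_mul_sq_le {μ : ℝ} (hμ : 0 < μ) (x y : ℝ) :
    x * y - μ / 2 * x ^ 2 ≤ y ^ 2 / (2 * μ) := by
  rw [le_div_iff₀ (by positivity)]
  nlinarith [sq_nonneg (μ * x - y)]

variable {μ : ℝ} {c a q₀ : ι → ℝ} {C : Set (ι → ℝ)}

theorem smoothedObjective_le_of_isMaxOn (hC : Convex ℝ C) (hq₀ : q₀ ∈ C)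
    (hmax : IsMaxOn (smoothedObjective μ c a) C q₀) {q : ι → ℝ} (hq : q ∈ C) :
    smoothedObjective μ c a q ≤ smoothedObjective μ c a q₀ - μ / 2 * ∑ i, (q i - q₀ i) ^ 2 := by
  have hmid := isMaxOn_iff.1 hmax _
    (hC hq hq₀ (by norm_num : (0 : ℝ) ≤ 1 / 2) (by norm_num : (0 : ℝ) ≤ 1 / 2) (by norm_num))
  rw [smoothedObjective_midpoint] at hmid
  linarith

theorem smoothedObjective_le_add_sq_of_isMaxOn (hμ : 0 < μ) (hC : Convex ℝ C) (hq₀ : q₀ ∈ C)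
    (hmax : IsMaxOn (smoothedObjective μ c a) C q₀) (b : ι → ℝ) {q : ι → ℝ} (hq : q ∈ C) :
    smoothedObjective μ c b q ≤ smoothedObjective μ c a q₀ + ∑ i, q₀ i * (b i - a i) +
      ∑ i, (b i - a i) ^ 2 / (2 * μ) := by
  have hsplit : ∑ i, q i * (b i - a i) =
      ∑ i, q₀ i * (b i - a i) + ∑ i, (q i - q₀ i) * (b i - a i) := by
    rw [← sum_add_distrib]
    exact sum_congr rfl fun i _ => by ring
  have hyoung : ∑ i, (q i - q₀ i) * (b i - a i) - μ / 2 * ∑ i, (q i - q₀ i) ^ 2 ≤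
      ∑ i, (b i - a i) ^ 2 / (2 * μ) := by
    rw [mul_sum, ← sum_sub_distrib]
    exact sum_le_sum fun i _ => mul_sub_half_mul_sq_le hμ _ _
  rw [smoothedObjective_eq_add μ c a b, hsplit]
  linarith [smoothedObjective_le_of_isMaxOn hC hq₀ hmax hq]

theorem smoothedMax_le_add_sq (hμ : 0 < μ) (hC : Convex ℝ C) (hq₀ : q₀ ∈ C)
    (hmax : IsMaxOn (smoothedObjective μ c a) C q₀) (b : ι → ℝ) :
    smoothedMax μ c C b ≤ smoothedObjective μ c a q₀ + ∑ i, q₀ i * (b i - a i) +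
      ∑ i, (b i - a i) ^ 2 / (2 * μ) :=
  csSup_le ⟨_, q₀, hq₀, rfl⟩ <| Set.forall_mem_image.2 fun _ hq =>
    smoothedObjective_le_add_sq_of_isMaxOn hμ hC hq₀ hmax b hq

theorem add_le_smoothedMax (hμ : 0 < μ) (hC : Convex ℝ C) (hq₀ : q₀ ∈ C)
    (hmax : IsMaxOn (smoothedObjective μ c a) C q₀) (b : ι → ℝ) :
    smoothedObjective μ c a q₀ + ∑ i, q₀ i * (b i - a i) ≤ smoothedMax μ c C b := by
  rw [← smoothedObjective_eq_add]
  exact le_csSup ⟨_, Set.forall_mem_image.2 fun _ hq =>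
    smoothedObjective_le_add_sq_of_isMaxOn hμ hC hq₀ hmax b hq⟩ (Set.mem_image_of_mem _ hq₀)

theorem hasFDerivAt_smoothedMax (hμ : 0 < μ) (hC : Convex ℝ C) (hq₀ : q₀ ∈ C)
    (hmax : IsMaxOn (smoothedObjective μ c a) C q₀) :
    HasFDerivAt (smoothedMax μ c C)
      (∑ i, q₀ i • (ContinuousLinearMap.proj i : (ι → ℝ) →L[ℝ] ℝ)) a := by
  have hlin : HasFDerivAt (fun b : ι → ℝ => smoothedObjective μ c a q₀ + ∑ i, q₀ i * (b i - a i))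
      (∑ i, q₀ i • (ContinuousLinearMap.proj i : (ι → ℝ) →L[ℝ] ℝ)) a :=
    (HasFDerivAt.fun_sum fun i _ =>
      ((hasFDerivAt_apply i a).sub_const (a i)).const_mul (q₀ i)).const_add _
  have hsq : HasFDerivAt (fun b : ι → ℝ => ∑ i, (b i - a i) ^ 2 / (2 * μ))
      (0 : (ι → ℝ) →L[ℝ] ℝ) a := by
    simpa [div_eq_mul_inv] using HasFDerivAt.fun_sum fun i (_ : i ∈ univ) =>
      HasFDerivAt.mul_const (((hasFDerivAt_apply (𝕜 := ℝ) i a).sub_const (a i)).pow 2) (2 * μ)⁻¹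
  exact hlin.of_eventually_le_of_le (by simpa using hlin.fun_add hsq)
    (.of_forall (add_le_smoothedMax hμ hC hq₀ hmax))
    (.of_forall (smoothedMax_le_add_sq hμ hC hq₀ hmax))
    (by simp)

theorem HasFDerivAt.smoothedMax_comp {E : Type*} [NormedAddCommGroup E] [NormedSpace ℝ E]
    {L : ι → E → ℝ} {L' : ι → E →L[ℝ] ℝ} {w : E} (hL : ∀ i, HasFDerivAt (L i) (L' i) w)
    (hμ : 0 < μ) (hC : Convex ℝ C) (hq₀ : q₀ ∈ C)
    (hmax : IsMaxOn (smoothedObjective μ c fun i => L i w) C q₀) :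
    HasFDerivAt (fun x => smoothedMax μ c C fun i => L i x) (∑ i, q₀ i • L' i) w := by
  refine ((hasFDerivAt_smoothedMax hμ hC hq₀ hmax).comp w (hasFDerivAt_pi.2 hL)).congr_fderiv ?_
  ext x
  simp

end SmoothedMax

theorem stmt9_general {n m : ℕ} (p μ : ℝ) (hμ : 0 < μ)
    (L : Fin n → EuclideanSpace ℝ (Fin m) → ℝ) (w : EuclideanSpace ℝ (Fin m))
    (g : Fin n → EuclideanSpace ℝ (Fin m)) (hg : ∀ i, HasGradientAt (L i) (g i) w)
    (qμ : Fin n → ℝ) (hqμ : qμ ∈ Cp n p)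
    (hmax : ∀ q ∈ Cp n p,
      ∑ i, q i * L i w - μ * ∑ i, (q i - 1 / (n : ℝ)) ^ 2 ≤
        ∑ i, qμ i * L i w - μ * ∑ i, (qμ i - 1 / (n : ℝ)) ^ 2) :
    HasGradientAt
      (fun w' : EuclideanSpace ℝ (Fin m) =>
        sSup ((fun q : Fin n → ℝ =>
          ∑ i, q i * L i w' - μ * ∑ i, (q i - 1 / (n : ℝ)) ^ 2) '' Cp n p))
      (∑ i, qμ i • g i) w := by
  rw [hasGradientAt_iff_hasFDerivAt, map_sum]
  simp only [map_smul]
  exact HasFDerivAt.smoothedMax_comp (fun i => (hg i).hasFDerivAt) hμ (convex_Cp n p) hqμ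
    (isMaxOn_iff.2 hmax)

/-- Proposition 2 (gradient part): with `d(q) = Σ_i (q_i - 1/n)²` and each `L^i`
differentiable at `w` with gradient `g i`, the smoothed objective
`f_μ(w') = max_{q ∈ C_p} (Σ_i q_i L^i(w') - μ d(q))` is differentiable at `w` with
`∇f_μ(w) = Σ_i (q_μ(w))_i ∇L^i(w)`, where `q_μ(w)` is the (unique) maximizer. -/
theorem stmt9 {n m : ℕ} (hn : 1 ≤ n) (p μ : ℝ) (hp0 : 0 < p) (hp1 : p < 1) (hμ : 0 < μ)
    (L : Fin n → EuclideanSpace ℝ (Fin m) → ℝ) (w : EuclideanSpace ℝ (Fin m))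
    (g : Fin n → EuclideanSpace ℝ (Fin m)) (hg : ∀ i, HasGradientAt (L i) (g i) w)
    (qμ : Fin n → ℝ) (hqμ : qμ ∈ Cp n p)
    (hmax : ∀ q ∈ Cp n p,
      ∑ i, q i * L i w - μ * ∑ i, (q i - 1 / (n : ℝ)) ^ 2 ≤
        ∑ i, qμ i * L i w - μ * ∑ i, (qμ i - 1 / (n : ℝ)) ^ 2) :
    HasGradientAt
      (fun w' : EuclideanSpace ℝ (Fin m) =>
        sSup ((fun q : Fin n → ℝ =>
          ∑ i, q i * L i w' - μ * ∑ i, (q i - 1 / (n : ℝ)) ^ 2) '' Cp n p))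
      (∑ i, qμ i • g i) w :=
  stmt9_general p μ hμ L w g hg qμ hqμ hmax
end

section
/- Let n ≥ 1, μ > 0, ℓ > 0 and u ∈ ℝ^n, and suppose n·ℓ > 1. Then the function g(λ) = Σ_{i=1}^n clamp((u_i − λ)/μ, 0, ℓ) is continuous and nonincreasing on ℝ, with g(λ) → 0 as λ → +∞ and g(λ) → nℓ > 1 as λ → −∞; consequently there exists λ* ∈ ℝ with g(λ*) = 1. -/
open Finset Filter

/-- The function `g(λ) = Σ_i clamp((u_i - λ)/μ, 0, ℓ)` is continuous and
nonincreasing, tends to `0` at `+∞` and to `nℓ > 1` at `-∞`; hence it takes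
the value `1` somewhere. -/
theorem stmt12 {n : ℕ} (hn : 1 ≤ n) (μ ℓ : ℝ) (hμ : 0 < μ) (hℓ : 0 < ℓ) (u : Fin n → ℝ)
    (hnl : 1 < (n : ℝ) * ℓ) :
    let g : ℝ → ℝ := fun lam => ∑ i, min (max ((u i - lam) / μ) 0) ℓ
    Continuous g ∧ Antitone g ∧
    Tendsto g atTop (nhds 0) ∧ Tendsto g atBot (nhds ((n : ℝ) * ℓ)) ∧
    ∃ lam : ℝ, g lam = 1 := by
  intro g
  haveI : Nonempty (Fin n) := ⟨⟨0, hn⟩⟩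
  have hcont : Continuous g := by
    apply continuous_finset_sum
    intro i _
    exact (((continuous_const.sub continuous_id).div_const μ).max continuous_const).min
      continuous_const
  have hanti : Antitone g := by
    intro a b hab
    apply Finset.sum_le_sum
    intro i _
    apply min_le_min _ le_rfl
    apply max_le_max _ le_rfl
    exact div_le_div_of_nonneg_right (by linarith) hμ.le
  -- values at extremes
  have htop : ∀ lam : ℝ, (∀ i, u i ≤ lam) → g lam = 0 := by
    intro lam h
    apply Finset.sum_eq_zero
    intro i _
    have h1 : (u i - lam) / μ ≤ 0 := div_nonpos_of_nonpos_of_nonneg (by linarith [h i]) hμ.le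
    rw [max_eq_right h1, min_eq_left hℓ.le]
  have hbot : ∀ lam : ℝ, (∀ i, lam ≤ u i - μ * ℓ) → g lam = (n : ℝ) * ℓ := by
    intro lam h
    have : g lam = ∑ _i : Fin n, ℓ := by
      apply Finset.sum_congr rfl
      intro i _
      have h1 : ℓ ≤ (u i - lam) / μ := by
        rw [le_div_iff₀ hμ]
        have := h i; nlinarith
      rw [max_eq_left (le_trans hℓ.le h1), min_eq_right h1]
    rw [this, Finset.sum_const, Finset.card_univ, Fintype.card_fin, nsmul_eq_mul]
  set M : ℝ := Finset.univ.sup' Finset.univ_nonempty u with hM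
  set m : ℝ := Finset.univ.inf' Finset.univ_nonempty (fun i => u i - μ * ℓ) with hm
  have hgM : g M = 0 := htop M (fun i => Finset.le_sup' u (Finset.mem_univ i))
  have hgm : g m = (n : ℝ) * ℓ := hbot m (fun i => Finset.inf'_le _ (Finset.mem_univ i))
  have hmM : m ≤ M := by
    have h1 : m ≤ u ⟨0, hn⟩ - μ * ℓ := Finset.inf'_le _ (Finset.mem_univ _)
    have h2 : u ⟨0, hn⟩ ≤ M := Finset.le_sup' u (Finset.mem_univ _)
    nlinarith
  refine ⟨hcont, hanti, ?_, ?_, ?_⟩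
  · apply Tendsto.congr' _ tendsto_const_nhds
    filter_upwards [eventually_ge_atTop M] with lam hlam
    exact (htop lam fun i => le_trans (Finset.le_sup' u (Finset.mem_univ i)) hlam).symm
  · apply Tendsto.congr' _ tendsto_const_nhds
    filter_upwards [eventually_le_atBot m] with lam hlam
    exact (hbot lam fun i => le_trans hlam (Finset.inf'_le _ (Finset.mem_univ i))).symm
  · have := intermediate_value_Icc' hmM hcont.continuousOn
    rw [hgM, hgm] at this
    obtain ⟨lam, _, hlam⟩ := this ⟨zero_le_one, hnl.le⟩
    exact ⟨lam, hlam⟩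
end

section
/- (Proposition 3, correctness of the primal recovery.) Let n ≥ 1, p ∈ (0,1), ℓ = 1/(n(1−p)), μ > 0 and v ∈ ℝ^n (the vector of losses). Set u_i = v_i + μ/n and suppose λ* ∈ ℝ satisfies Σ_{i=1}^n clamp((u_i − λ*)/μ, 0, ℓ) = 1. Define q* ∈ ℝ^n by q*_i = clamp((u_i − λ*)/μ, 0, ℓ). Then q* ∈ C_p and q* is the unique maximizer over C_p of the function q ↦ Σ_{i=1}^n q_i v_i − (μ/2) Σ_{i=1}^n (q_i − 1/n)². -/
open Finset

/-- Proposition 3 (correctness of the primal recovery): with `u_i = v_i + μ/n`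
and `λ*` a root of `Σ_i clamp((u_i - λ)/μ, 0, ℓ) = 1` (where `ℓ = 1/(n(1-p))`),
the vector `q*_i = clamp((u_i - λ*)/μ, 0, ℓ)` belongs to `C_p` and is the unique
maximizer over `C_p` of `q ↦ Σ_i q_i v_i - (μ/2) Σ_i (q_i - 1/n)²`. -/
theorem stmt13 {n : ℕ} (hn : 1 ≤ n) (p μ : ℝ) (hp0 : 0 < p) (hp1 : p < 1) (hμ : 0 < μ)
    (v : Fin n → ℝ) (lam : ℝ)
    (hlam : ∑ i, min (max ((v i + μ / (n : ℝ) - lam) / μ) 0) (1 / ((n : ℝ) * (1 - p))) = 1) :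
    let ℓ : ℝ := 1 / ((n : ℝ) * (1 - p))
    let qs : Fin n → ℝ := fun i => min (max ((v i + μ / (n : ℝ) - lam) / μ) 0) ℓ
    let obj : (Fin n → ℝ) → ℝ :=
      fun q => ∑ i, q i * v i - μ / 2 * ∑ i, (q i - 1 / (n : ℝ)) ^ 2
    qs ∈ Cp n p ∧ ∀ q ∈ Cp n p, q ≠ qs → obj q < obj qs := by
  intro ℓ qs obj
  have hn0 : (0:ℝ) < n := by exact_mod_cast Nat.pos_of_ne_zero (by omega)
  have hn0' : (n:ℝ) ≠ 0 := ne_of_gt hn0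
  have h1p : (0:ℝ) < 1 - p := by linarith
  have hℓ : (0:ℝ) < ℓ := by
    show (0:ℝ) < 1 / ((n : ℝ) * (1 - p))
    positivity
  set w : Fin n → ℝ := fun i => (v i + μ / (n:ℝ) - lam) / μ with hwdef
  have hqs : ∀ i, qs i = min (max (w i) 0) ℓ := fun i => rfl
  have hqsum : (∑ i, qs i) = 1 := hlam
  have hmem : qs ∈ Cp n p := by
    refine ⟨fun i => le_min (le_max_right _ _) hℓ.le, hqsum, fun i => min_le_right _ _⟩
  refine ⟨hmem, ?_⟩
  have key : ∀ q : Fin n → ℝ, (∑ i, q i) = 1 →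
      obj q + μ/2 * ∑ i, (q i - w i)^2
        = lam + μ/2 * ∑ i, (w i)^2 - μ/(2*(n:ℝ)) := by
    intro q hq
    have hper : ∀ i, q i * v i - μ/2 * (q i - 1/(n:ℝ))^2 + μ/2 * (q i - w i)^2
        = lam * q i + μ/2 * (w i)^2 - μ/(2*(n:ℝ)^2) := by
      intro i
      simp only [hwdef]
      field_simp
      ring
    have lhs : obj q + μ/2 * ∑ i, (q i - w i)^2
        = ∑ i, (q i * v i - μ/2 * (q i - 1/(n:ℝ))^2 + μ/2 * (q i - w i)^2) := by
      show (∑ i, q i * v i - μ / 2 * ∑ i, (q i - 1 / (n:ℝ)) ^ 2) + μ/2 * ∑ i, (q i - w i)^2 = _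
      rw [Finset.mul_sum, Finset.mul_sum, ← Finset.sum_sub_distrib, ← Finset.sum_add_distrib]
    rw [lhs, Finset.sum_congr rfl (fun i _ => hper i), Finset.sum_sub_distrib,
      Finset.sum_add_distrib, ← Finset.mul_sum, ← Finset.mul_sum, hq,
      Finset.sum_const, Finset.card_univ, Fintype.card_fin, nsmul_eq_mul]
    field_simp
  intro q hq hne
  obtain ⟨hq0, hq1, hqℓ⟩ := hq
  have hkq := key q hq1
  have hkqs := key qs hqsum
  have hineq : ∀ i, 0 ≤ (q i - qs i) * (qs i - w i) := by
    intro i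
    rcases le_or_gt (w i) 0 with h0 | h0
    · have h : qs i = 0 := by
        rw [hqs i, max_eq_right h0, min_eq_left hℓ.le]
      rw [h]
      have := hq0 i
      nlinarith
    rcases le_or_gt (w i) ℓ with h1 | h1
    · have h : qs i = w i := by
        rw [hqs i, max_eq_left h0.le, min_eq_left h1]
      rw [h]; simp
    · have h : qs i = ℓ := by
        rw [hqs i, max_eq_left h0.le, min_eq_right h1.le]
      rw [h]
      have := hqℓ i
      nlinarith
  have hcross : 0 ≤ ∑ i, (q i - qs i) * (qs i - w i) :=
    Finset.sum_nonneg fun i _ => hineq i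
  have hsumpos : 0 < ∑ i, (q i - qs i)^2 := by
    obtain ⟨i, hi⟩ : ∃ i, q i ≠ qs i := by
      by_contra h
      push_neg at h
      exact hne (funext h)
    refine Finset.sum_pos' (fun j _ => sq_nonneg _) ⟨i, Finset.mem_univ i, ?_⟩
    have : q i - qs i ≠ 0 := sub_ne_zero.mpr hi
    positivity
  have hA : ∑ i, (q i - w i)^2 - ∑ i, (qs i - w i)^2
      = ∑ i, (q i - qs i)^2 + 2 * ∑ i, (q i - qs i) * (qs i - w i) := by
    rw [← Finset.sum_sub_distrib, Finset.mul_sum, ← Finset.sum_add_distrib]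
    exact Finset.sum_congr rfl fun i _ => by ring
  have hdiff : 0 < ∑ i, (q i - w i)^2 - ∑ i, (qs i - w i)^2 := by
    rw [hA]; linarith
  have hmul := mul_pos (half_pos hμ) hdiff
  rw [mul_sub] at hmul
  clear_value ℓ qs obj
  linarith
end

section
/- Let n ≥ 1, p ∈ (0,1), and v ∈ ℝ^n. For μ > 0 let q_μ be the unique maximizer over C_p of q ↦ ⟨q, v⟩ − μ Σ_i (q_i − 1/n)², and let h_μ = max_{q ∈ C_p} ( ⟨q, v⟩ − μ Σ_i (q_i − 1/n)² ) denote the optimal value. Then as μ → +∞, q_μ converges to the uniform vector (1/n, …, 1/n) and h_μ converges to the mean (1/n) Σ_{i=1}^n v_i. -/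
open Finset Filter

/-- As `μ → +∞`, the maximizer `q_μ` of `q ↦ ⟨q,v⟩ - μ Σ_i (q_i - 1/n)²` over
`C_p` converges to the uniform vector `(1/n, …, 1/n)` and the optimal value
converges to the mean `(1/n) Σ_i v_i`. -/
theorem stmt14 {n : ℕ} (hn : 1 ≤ n) (p : ℝ) (hp0 : 0 < p) (hp1 : p < 1) (v : Fin n → ℝ)
    (qμ : ℝ → (Fin n → ℝ))
    (hqμ : ∀ μ : ℝ, 0 < μ → qμ μ ∈ Cp n p ∧ ∀ q ∈ Cp n p,
      ∑ i, q i * v i - μ * ∑ i, (q i - 1 / (n : ℝ)) ^ 2 ≤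
        ∑ i, qμ μ i * v i - μ * ∑ i, (qμ μ i - 1 / (n : ℝ)) ^ 2) :
    Tendsto qμ atTop (nhds (fun _ => 1 / (n : ℝ))) ∧
    Tendsto
      (fun μ : ℝ => sSup ((fun q : Fin n → ℝ =>
        ∑ i, q i * v i - μ * ∑ i, (q i - 1 / (n : ℝ)) ^ 2) '' Cp n p))
      atTop (nhds ((1 / (n : ℝ)) * ∑ i, v i)) := by
  have hn0 : (0:ℝ) < n := by exact_mod_cast hn
  have h1p : (0:ℝ) < 1 - p := by linarith
  set L : ℝ := 1 / ((n:ℝ) * (1 - p)) with hLdef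
  have hLpos : 0 < L := by positivity
  have hunL : (1:ℝ)/n ≤ L := by
    apply one_div_le_one_div_of_le (by positivity)
    nlinarith
  have hu : (fun _ : Fin n => 1/(n:ℝ)) ∈ Cp n p := by
    refine ⟨fun i => by positivity, ?_, fun i => hunL⟩
    rw [Finset.sum_const, Finset.card_univ, Fintype.card_fin, nsmul_eq_mul]
    field_simp
  set V := ∑ i, |v i| with hV
  have hV0 : 0 ≤ V := Finset.sum_nonneg fun i _ => abs_nonneg _
  set S : ℝ → ℝ := fun μ => ∑ i, (qμ μ i - 1/(n:ℝ))^2 with hSdef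
  have hS0 : ∀ μ, 0 ≤ S μ := fun μ => Finset.sum_nonneg fun i _ => sq_nonneg _
  have hcoordL : ∀ μ, 0 < μ → ∀ i, |qμ μ i - 1/(n:ℝ)| ≤ L := by
    intro μ hμ i
    obtain ⟨hpos, hsum, hle⟩ := (hqμ μ hμ).1
    have h1 := hle i
    have h2 := hpos i
    have h3 : (0:ℝ) ≤ 1/(n:ℝ) := by positivity
    rw [abs_sub_le_iff]
    constructor <;> linarith
  have hdiff : ∀ μ, ∑ i, qμ μ i * v i - ∑ i, (1/(n:ℝ)) * v i
      = ∑ i, (qμ μ i - 1/(n:ℝ)) * v i := by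
    intro μ
    rw [← Finset.sum_sub_distrib]
    exact Finset.sum_congr rfl fun i _ => by ring
  have hkey : ∀ μ, 0 < μ → μ * S μ ≤ L * V := by
    intro μ hμ
    have hopt := (hqμ μ hμ).2 _ hu
    have hz : ∑ i : Fin n, ((1:ℝ)/(n:ℝ) - 1/(n:ℝ))^2 = 0 := by simp
    rw [hz, mul_zero, sub_zero] at hopt
    have hbd : ∑ i, (qμ μ i - 1/(n:ℝ)) * v i ≤ L * V := by
      calc ∑ i, (qμ μ i - 1/(n:ℝ)) * v i ≤ ∑ i, L * |v i| := by
            apply Finset.sum_le_sum; intro i _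
            calc (qμ μ i - 1/(n:ℝ)) * v i ≤ |(qμ μ i - 1/(n:ℝ)) * v i| := le_abs_self _
              _ = |qμ μ i - 1/(n:ℝ)| * |v i| := abs_mul _ _
              _ ≤ L * |v i| := mul_le_mul_of_nonneg_right (hcoordL μ hμ i) (abs_nonneg _)
        _ = L * V := by rw [← Finset.mul_sum]
    have := hdiff μ
    linarith
  have hSle : ∀ μ, 0 < μ → S μ ≤ L * V / μ := by
    intro μ hμ
    rw [le_div_iff₀ hμ]
    calc S μ * μ = μ * S μ := mul_comm _ _
      _ ≤ L * V := hkey μ hμ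
  -- bound on each coordinate difference
  have hcoordsq : ∀ μ, 0 < μ → ∀ i, (qμ μ i - 1/(n:ℝ))^2 ≤ L * V / μ := by
    intro μ hμ i
    refine le_trans ?_ (hSle μ hμ)
    exact Finset.single_le_sum (f := fun j => (qμ μ j - 1/(n:ℝ))^2) (fun j _ => sq_nonneg _) (Finset.mem_univ i)
  have hBtend : Tendsto (fun μ : ℝ => Real.sqrt (L * V / μ)) atTop (nhds 0) := by
    have h1 : Tendsto (fun μ : ℝ => L * V / μ) atTop (nhds 0) :=
      tendsto_const_nhds.div_atTop tendsto_id
    simpa using h1.sqrt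
  constructor
  · rw [tendsto_pi_nhds]
    intro i
    rw [tendsto_iff_dist_tendsto_zero]
    apply tendsto_of_tendsto_of_tendsto_of_le_of_le' tendsto_const_nhds hBtend
    · exact Eventually.of_forall fun μ => dist_nonneg
    · filter_upwards [eventually_gt_atTop (0:ℝ)] with μ hμ
      rw [Real.dist_eq]
      exact Real.abs_le_sqrt (hcoordsq μ hμ i)
  · have hmean : ∑ i, (1/(n:ℝ)) * v i = (1/(n:ℝ)) * ∑ i, v i := by
      rw [Finset.mul_sum]
    apply tendsto_of_tendsto_of_tendsto_of_le_of_le'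
      (g := fun _ : ℝ => (1/(n:ℝ)) * ∑ i, v i)
      (h := fun μ : ℝ => (1/(n:ℝ)) * ∑ i, v i + V * Real.sqrt (L * V / μ))
      tendsto_const_nhds
    · have : Tendsto (fun μ : ℝ => V * Real.sqrt (L * V / μ)) atTop (nhds 0) := by
        simpa using hBtend.const_mul V
      simpa using (tendsto_const_nhds (x := (1/(n:ℝ)) * ∑ i, v i) (f := atTop)).add this
    · filter_upwards [eventually_gt_atTop (0:ℝ)] with μ hμ
      have hub : ∀ x ∈ (fun q : Fin n → ℝ =>
          ∑ i, q i * v i - μ * ∑ i, (q i - 1 / (n : ℝ)) ^ 2) '' Cp n p,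
          x ≤ ∑ i, qμ μ i * v i - μ * S μ := by
        rintro x ⟨q, hq, rfl⟩
        exact (hqμ μ hμ).2 q hq
      have hmem : ∑ i, qμ μ i * v i - μ * S μ ∈ (fun q : Fin n → ℝ =>
          ∑ i, q i * v i - μ * ∑ i, (q i - 1 / (n : ℝ)) ^ 2) '' Cp n p :=
        ⟨qμ μ, (hqμ μ hμ).1, rfl⟩
      have hsup : sSup ((fun q : Fin n → ℝ =>
          ∑ i, q i * v i - μ * ∑ i, (q i - 1 / (n : ℝ)) ^ 2) '' Cp n p)
          = ∑ i, qμ μ i * v i - μ * S μ := IsGreatest.csSup_eq ⟨hmem, hub⟩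
      rw [hsup]
      have hopt := (hqμ μ hμ).2 _ hu
      have hz : ∑ i : Fin n, ((1:ℝ)/(n:ℝ) - 1/(n:ℝ))^2 = 0 := by simp
      rw [hz, mul_zero, sub_zero, hmean] at hopt
      exact hopt
    · filter_upwards [eventually_gt_atTop (0:ℝ)] with μ hμ
      have hub : ∀ x ∈ (fun q : Fin n → ℝ =>
          ∑ i, q i * v i - μ * ∑ i, (q i - 1 / (n : ℝ)) ^ 2) '' Cp n p,
          x ≤ ∑ i, qμ μ i * v i - μ * S μ := by
        rintro x ⟨q, hq, rfl⟩
        exact (hqμ μ hμ).2 q hq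
      have hmem : ∑ i, qμ μ i * v i - μ * S μ ∈ (fun q : Fin n → ℝ =>
          ∑ i, q i * v i - μ * ∑ i, (q i - 1 / (n : ℝ)) ^ 2) '' Cp n p :=
        ⟨qμ μ, (hqμ μ hμ).1, rfl⟩
      have hsup : sSup ((fun q : Fin n → ℝ =>
          ∑ i, q i * v i - μ * ∑ i, (q i - 1 / (n : ℝ)) ^ 2) '' Cp n p)
          = ∑ i, qμ μ i * v i - μ * S μ := IsGreatest.csSup_eq ⟨hmem, hub⟩
      rw [hsup]
      have h1 : ∑ i, qμ μ i * v i ≤ ∑ i, (1/(n:ℝ)) * v i + V * Real.sqrt (L * V / μ) := by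
        have hbd : ∑ i, (qμ μ i - 1/(n:ℝ)) * v i ≤ V * Real.sqrt (L * V / μ) := by
          calc ∑ i, (qμ μ i - 1/(n:ℝ)) * v i ≤ ∑ i, Real.sqrt (L * V / μ) * |v i| := by
                apply Finset.sum_le_sum; intro i _
                calc (qμ μ i - 1/(n:ℝ)) * v i ≤ |(qμ μ i - 1/(n:ℝ)) * v i| := le_abs_self _
                  _ = |qμ μ i - 1/(n:ℝ)| * |v i| := abs_mul _ _
                  _ ≤ Real.sqrt (L * V / μ) * |v i| :=
                      mul_le_mul_of_nonneg_right (Real.abs_le_sqrt (hcoordsq μ hμ i)) (abs_nonneg _)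
            _ = Real.sqrt (L * V / μ) * V := by rw [← Finset.mul_sum]
            _ = V * Real.sqrt (L * V / μ) := mul_comm _ _
        have := hdiff μ
        linarith
      have h2 : 0 ≤ μ * S μ := mul_nonneg hμ.le (hS0 μ)
      rw [hmean] at h1
      linarith
end
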